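/- arXiv:1710.00216 — 5 statements merged into one kernel-verified Lean document; each statement's English description precedes it below -/
import Mathlib

section
/- There exists a unique k₀ in the open interval (0,1) such that 2E(k₀) − K(k₀) = 0. (Numerically k₀ ≈ 0.909.) -/
open Real Set Filter Topology

/-- Complete elliptic integral of the first kind. -/
noncomputable def K (k : ℝ) : ℝ :=
  ∫ t in (0:ℝ)..(π/2), 1 / Real.sqrt (1 - k^2 * Real.sin t ^ 2)

/-- Complete elliptic integral of the second kind. -/
noncomputable def E (k : ℝ) : ℝ :=
  ∫ t in (0:ℝ)..(π/2), Real.sqrt (1 - k^2 * Real.sin t ^ 2)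

/-!
Pointwise in `t`, the integrand of `E` decreases and that of `K` increases with `k ∈ [0, 1)`, so
`2E − K` is strictly decreasing there; it is continuous and equals `π/2 > 0` at `k = 0`. It becomes
negative near `k = 1` because `K` blows up: with `k² + c² = 1` one has
`1 − k² sin² t = c² + k² cos² t ≤ c² + (π/2 − t)²`, hence `K(k) ≥ arsinh (π / 2c)`, which exceeds
`π ≥ 2E(k)` for `c = 1/20`. The intermediate value theorem then gives the root.
-/

theorem one_sub_sq_mul_sin_sq_pos {k : ℝ} (hk : k ^ 2 < 1) (t : ℝ) :
    0 < 1 - k ^ 2 * sin t ^ 2 := by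
  nlinarith [sin_sq_le_one t, sq_nonneg k]

theorem E_zero : E 0 = π / 2 := by simp [E]

theorem K_zero : K 0 = π / 2 := by simp [K]

theorem continuous_E : Continuous E :=
  intervalIntegral.continuous_parametric_intervalIntegral_of_continuous'
    (f := fun k t => √(1 - k ^ 2 * sin t ^ 2)) (by fun_prop) 0 (π / 2)

theorem continuous_K_integrand {k : ℝ} (hk : k ^ 2 < 1) :
    Continuous fun t => 1 / √(1 - k ^ 2 * sin t ^ 2) :=
  continuous_const.div (by fun_prop) fun t => (sqrt_pos.2 (one_sub_sq_mul_sin_sq_pos hk t)).ne'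

theorem continuousOn_K : ContinuousOn K (Ioo (-1) 1) := by
  rw [continuousOn_iff_continuous_domRestrict]
  refine intervalIntegral.continuous_parametric_intervalIntegral_of_continuous'
    (f := fun (k : Ioo (-1 : ℝ) 1) t => 1 / √(1 - (k : ℝ) ^ 2 * sin t ^ 2)) ?_ 0 (π / 2)
  refine continuous_const.div (by fun_prop) fun p => (sqrt_pos.2 ?_).ne'
  exact one_sub_sq_mul_sin_sq_pos (sq_lt_one_iff_abs_lt_one _ |>.2 (abs_lt.2 p.1.2)) _

theorem E_strictAntiOn : StrictAntiOn E (Icc 0 1) := by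
  intro k hk l hl hkl
  refine intervalIntegral.integral_lt_integral_of_continuousOn_of_le_of_exists_lt
    (by positivity) (by fun_prop) (by fun_prop) (fun t _ => ?_)
    ⟨π / 2, right_mem_Icc.2 (by positivity), ?_⟩
  · gcongr
    exact hk.1
  · simp only [sin_pi_div_two, one_pow, mul_one]
    exact sqrt_lt_sqrt (by nlinarith [hl.1, hl.2]) (by nlinarith [hk.1])

theorem K_strictMonoOn : StrictMonoOn K (Ico 0 1) := by
  intro k hk l hl hkl
  have hk2 : k ^ 2 < 1 := by nlinarith [hk.1, hk.2]
  have hl2 : l ^ 2 < 1 := by nlinarith [hl.1, hl.2]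
  refine intervalIntegral.integral_lt_integral_of_continuousOn_of_le_of_exists_lt
    (by positivity) (continuous_K_integrand hk2).continuousOn
    (continuous_K_integrand hl2).continuousOn (fun t _ => ?_)
    ⟨π / 2, right_mem_Icc.2 (by positivity), ?_⟩
  · have hsqrt := sqrt_pos.2 (one_sub_sq_mul_sin_sq_pos hl2 t)
    gcongr
    exact hk.1
  · simp only [sin_pi_div_two, one_pow, mul_one]
    have hl2' : 0 < 1 - l ^ 2 := by linarith
    gcongr
    exact hk.1

theorem two_mul_E_sub_K_strictAntiOn : StrictAntiOn (fun k => 2 * E k - K k) (Ico 0 1) := by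
  intro k hk l hl hkl
  have hE := E_strictAntiOn (Ico_subset_Icc_self hk) (Ico_subset_Icc_self hl) hkl
  have hK := K_strictMonoOn hk hl hkl
  dsimp only
  linarith

theorem integral_one_div_sqrt_sq_add_sq {c : ℝ} (hc : 0 < c) (b : ℝ) :
    ∫ s in (0:ℝ)..b, 1 / √(c ^ 2 + s ^ 2) = arsinh (b / c) := by
  have hderiv (s : ℝ) : HasDerivAt (fun s => arsinh (s / c)) (1 / √(c ^ 2 + s ^ 2)) s := by
    convert (hasDerivAt_id' (x := s)).div_const c |>.arsinh using 1
    rw [show 1 + (s / c) ^ 2 = (c ^ 2 + s ^ 2) / c ^ 2 by field_simp,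
      sqrt_div' _ (sq_nonneg c), sqrt_sq hc.le, smul_eq_mul]
    have : 0 < √(c ^ 2 + s ^ 2) := sqrt_pos.2 (by positivity)
    field_simp
  have hcont : Continuous fun s => 1 / √(c ^ 2 + s ^ 2) :=
    continuous_const.div (by fun_prop) fun s => (sqrt_pos.2 (by positivity)).ne'
  rw [intervalIntegral.integral_eq_sub_of_hasDerivAt (fun s _ => hderiv s)
    (hcont.intervalIntegrable _ _)]
  simp

theorem arsinh_le_K {k c : ℝ} (hc : 0 < c) (hkc : k ^ 2 + c ^ 2 = 1) :
    arsinh (π / 2 / c) ≤ K k := by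
  have hcomp : ∫ t in (0:ℝ)..π / 2, 1 / √(c ^ 2 + (π / 2 - t) ^ 2) = arsinh (π / 2 / c) := by
    rw [intervalIntegral.integral_comp_sub_left (fun s => 1 / √(c ^ 2 + s ^ 2)), sub_self,
      sub_zero, integral_one_div_sqrt_sq_add_sq hc]
  rw [← hcomp]
  refine intervalIntegral.integral_mono_on (by positivity) ?_ ?_ fun t ht => ?_
  · exact (continuous_const.div (by fun_prop)
      fun t => (sqrt_pos.2 (by positivity)).ne').intervalIntegrable _ _
  · exact (continuous_K_integrand (by nlinarith)).intervalIntegrable _ _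
  · have hcos : cos t ≤ π / 2 - t := by
      rw [← sin_pi_div_two_sub]
      exact sin_le (by linarith [ht.2])
    have hcos0 : 0 ≤ cos t := cos_nonneg_of_mem_Icc ⟨by linarith [ht.1, pi_pos], ht.2⟩
    have hk2 : k ^ 2 ≤ 1 := by nlinarith
    have hmod : 1 - k ^ 2 * sin t ^ 2 = c ^ 2 + k ^ 2 * cos t ^ 2 := by
      linear_combination -hkc - k ^ 2 * cos_sq_add_sin_sq t
    have hpos := one_sub_sq_mul_sin_sq_pos (k := k) (by nlinarith) t
    have hle : 1 - k ^ 2 * sin t ^ 2 ≤ c ^ 2 + (π / 2 - t) ^ 2 := by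
      rw [hmod]
      gcongr
      nlinarith [sq_nonneg (cos t)]
    gcongr

theorem pi_lt_arsinh_ten_mul_pi : π < arsinh (10 * π) := by
  have hexp : exp π < 55 :=
    calc exp π ≤ exp 1 ^ 4 := by
          rw [← exp_nat_mul]
          exact exp_le_exp.2 (by push_cast; linarith [pi_le_four])
      _ < 2.7182818286 ^ 4 := by gcongr; exact exp_one_lt_d9
      _ < 55 := by norm_num
  have hsinh : sinh π < 10 * π := by
    rw [sinh_eq]
    linarith [exp_pos (-π), pi_gt_three]
  calc π = arsinh (sinh π) := (arsinh_sinh π).symm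
    _ < arsinh (10 * π) := arsinh_lt_arsinh.2 hsinh

theorem exists_two_mul_E_sub_K_neg : ∃ k ∈ Ioo (0:ℝ) 1, 2 * E k - K k < 0 := by
  set k := √(399 / 400)
  have hk : k ∈ Ioo 0 1 := ⟨sqrt_pos.2 (by norm_num), (sqrt_lt' one_pos).2 (by norm_num)⟩
  have hK : π < K k := by
    have := arsinh_le_K (k := k) (c := 1 / 20) (by norm_num) (by rw [sq_sqrt] <;> norm_num)
    rw [show π / 2 / (1 / 20) = 10 * π by ring] at this
    exact pi_lt_arsinh_ten_mul_pi.trans_le this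
  have hE : E k ≤ π / 2 :=
    E_zero ▸ E_strictAntiOn.antitoneOn ⟨le_rfl, zero_le_one⟩ ⟨hk.1.le, hk.2.le⟩ hk.1.le
  exact ⟨k, hk, by linarith⟩

/-- There exists a unique `k₀ ∈ (0,1)` with `2E(k₀) − K(k₀) = 0`. -/
theorem unique_root_k₀ :
    ∃! k₀ : ℝ, k₀ ∈ Set.Ioo (0:ℝ) 1 ∧ 2 * E k₀ - K k₀ = 0 := by
  obtain ⟨k₁, hk₁, hneg⟩ := exists_two_mul_E_sub_K_neg
  have hcont : ContinuousOn (fun k => 2 * E k - K k) (Icc 0 k₁) :=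
    (continuous_const.mul continuous_E).continuousOn.sub
      (continuousOn_K.mono (Icc_subset_Ioo (by norm_num) hk₁.2))
  have hpos : 0 < 2 * E 0 - K 0 := by rw [E_zero, K_zero]; linarith [pi_pos]
  obtain ⟨k₀, hk₀, hroot⟩ := intermediate_value_Icc' hk₁.1.le hcont ⟨hneg.le, hpos.le⟩
  have hk₀pos : 0 < k₀ := hk₀.1.lt_of_ne (by rintro rfl; linarith)
  refine ⟨k₀, ⟨⟨hk₀pos, hk₀.2.trans_lt hk₁.2⟩, hroot⟩, fun k ⟨hk, hk_root⟩ => ?_⟩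
  exact two_mul_E_sub_K_strictAntiOn.injOn ⟨hk.1.le, hk.2⟩
    ⟨hk₀pos.le, hk₀.2.trans_lt hk₁.2⟩ (hk_root.trans hroot.symm)
end

section
/- For every k ∈ (0, k₀) the quantity ι₃(k) = (3E(k)² − (5 − 4k²)E(k)K(k) + 2(1 − k²)K(k)²)/(1 − k²) is strictly positive. -/
open Real Set Filter Topology

noncomputable def ι₃ (k : ℝ) : ℝ :=
  (3 * (E k)^2 - (5 - 4 * k^2) * E k * K k + 2 * (1 - k^2) * (K k)^2) / (1 - k^2)

/-!
The numerator of `ι₃ k` is the quadratic form `3E² − (5 − 4k²)EK + 2(1 − k²)K²` in `(E, K)`,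
whose discriminant `16k⁴ − 16k² + 1` is negative for `(2 − √3)/4 < k² < (2 + √3)/4`; there the
numerator is positive because `K > 0`. Near `k = 0` the numerator is `(3/2)(π/2)²k² + O(k⁴)`, and
integrating truncated binomial expansions of `(1 − k² sin² t)^{±1/2}` makes this effective for
`k² ≤ 1/10`. The same expansions give `2E − K < 0` for `k² ≥ 93/100`, so `k₀² < 93/100`.
-/

open intervalIntegral Finset

lemma sqrt_one_sub_le {u : ℝ} (h₀ : 0 ≤ u) (h₁ : u ≤ 1) :
    √(1 - u) ≤ 1 - u / 2 - u ^ 2 / 8 - u ^ 3 / 16 := by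
  rw [Real.sqrt_le_iff]
  constructor
  · nlinarith [pow_nonneg h₀ 3]
  · nlinarith [pow_nonneg h₀ 3, pow_nonneg h₀ 4, pow_nonneg h₀ 5, pow_nonneg h₀ 6]

lemma le_sqrt_one_sub {u : ℝ} (h₀ : 0 ≤ u) (h₁ : u ≤ 1) :
    1 - u / 2 - u ^ 2 / 2 ≤ √(1 - u) := by
  have h : 1 - u / 2 - u ^ 2 / 2 = (1 - u) * (1 + u / 2) := by ring
  rw [h, Real.le_sqrt (by nlinarith) (by linarith)]
  nlinarith [mul_nonneg (sub_nonneg.2 h₁) (pow_nonneg h₀ 2), pow_nonneg h₀ 3,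
    mul_nonneg (sub_nonneg.2 h₁) (pow_nonneg h₀ 3)]

lemma le_one_div_sqrt_one_sub {u : ℝ} (h₀ : 0 ≤ u) (h₁ : u < 1) :
    1 + u / 2 + 3 * u ^ 2 / 8 + 5 * u ^ 3 / 16 ≤ 1 / √(1 - u) := by
  have hp : 0 ≤ 1 + u / 2 + 3 * u ^ 2 / 8 + 5 * u ^ 3 / 16 := by positivity
  rw [le_div_iff₀ (Real.sqrt_pos.2 (by linarith)), ← Real.sqrt_sq hp,
    ← Real.sqrt_mul (by positivity), Real.sqrt_le_one]
  nlinarith [pow_nonneg h₀ 3, pow_nonneg h₀ 4, pow_nonneg h₀ 5, pow_nonneg h₀ 6, pow_nonneg h₀ 7]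

lemma one_div_sqrt_one_sub_le {u : ℝ} (h₀ : 0 ≤ u) (h₁ : u ≤ 1 / 2) :
    1 / √(1 - u) ≤ 1 + u / 2 + u ^ 2 := by
  have hp : 0 ≤ 1 + u / 2 + u ^ 2 := by positivity
  rw [div_le_iff₀ (Real.sqrt_pos.2 (by linarith)), ← Real.sqrt_sq hp,
    ← Real.sqrt_mul (by positivity), Real.one_le_sqrt]
  nlinarith [pow_nonneg h₀ 3, pow_nonneg h₀ 4, pow_nonneg h₀ 5]

lemma continuousOn_one_div_sqrt_one_sub {a : ℝ} (ha : a < 1) :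
    ContinuousOn (fun u => 1 / √(1 - u)) (Icc 0 a) :=
  continuousOn_const.div (by fun_prop) fun u hu => (Real.sqrt_pos.2 (by linarith [hu.2])).ne'

theorem integral_sin_pow_even_zero_pi_div_two (n : ℕ) :
    ∫ x in 0..π / 2, sin x ^ (2 * n) = π / 2 * ∏ i ∈ range n, (2 * (i : ℝ) + 1) / (2 * i + 2) := by
  induction n with
  | zero => simp
  | succ k ih =>
    rw [prod_range_succ_comm, mul_left_comm, ← ih, Nat.mul_succ, integral_sin_pow]
    simp

noncomputable def sinSqIntegral (f : ℝ → ℝ) (k : ℝ) : ℝ :=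
  ∫ t in 0..π / 2, f (k ^ 2 * sin t ^ 2)

lemma sinSqIntegral_mono {f g : ℝ → ℝ} {k : ℝ} (hf : ContinuousOn f (Icc 0 (k ^ 2)))
    (hg : ContinuousOn g (Icc 0 (k ^ 2))) (hfg : ∀ u ∈ Icc 0 (k ^ 2), f u ≤ g u) :
    sinSqIntegral f k ≤ sinSqIntegral g k := by
  have hmem (t : ℝ) : k ^ 2 * sin t ^ 2 ∈ Icc 0 (k ^ 2) :=
    ⟨by positivity, mul_le_of_le_one_right (sq_nonneg k) (sin_sq_le_one t)⟩
  have hint {h : ℝ → ℝ} (hh : ContinuousOn h (Icc 0 (k ^ 2))) :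
      IntervalIntegrable (fun t => h (k ^ 2 * sin t ^ 2)) MeasureTheory.volume 0 (π / 2) :=
    (hh.comp_continuous (by fun_prop) hmem).intervalIntegrable _ _
  exact integral_mono_on (by positivity) (hint hf) (hint hg) fun t _ => hfg _ (hmem t)

lemma sinSqIntegral_cubic (a₀ a₁ a₂ a₃ k : ℝ) :
    sinSqIntegral (fun u => a₀ + a₁ * u + a₂ * u ^ 2 + a₃ * u ^ 3) k
      = π / 2 * (a₀ + a₁ * k ^ 2 / 2 + 3 * a₂ * k ^ 4 / 8 + 5 * a₃ * k ^ 6 / 16) := by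
  have hint (n : ℕ) (c : ℝ) :
      IntervalIntegrable (fun t => c * sin t ^ (2 * n)) MeasureTheory.volume 0 (π / 2) :=
    (by fun_prop : Continuous fun t => c * sin t ^ (2 * n)).intervalIntegrable _ _
  have h : (fun t => a₀ + a₁ * (k ^ 2 * sin t ^ 2) + a₂ * (k ^ 2 * sin t ^ 2) ^ 2
      + a₃ * (k ^ 2 * sin t ^ 2) ^ 3) = fun t => a₀ * sin t ^ (2 * 0)
      + a₁ * k ^ 2 * sin t ^ (2 * 1) + a₂ * k ^ 4 * sin t ^ (2 * 2)
      + a₃ * k ^ 6 * sin t ^ (2 * 3) := by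
    funext t; ring
  rw [sinSqIntegral, h, integral_add (((hint 0 _).add (hint 1 _)).add (hint 2 _)) (hint 3 _),
    integral_add ((hint 0 _).add (hint 1 _)) (hint 2 _), integral_add (hint 0 _) (hint 1 _)]
  simp only [integral_const_mul, integral_sin_pow_even_zero_pi_div_two, prod_range_succ,
    prod_range_zero, Nat.cast_ofNat, Nat.cast_one, Nat.cast_zero]
  ring

lemma E_le {k : ℝ} (hk : k ^ 2 ≤ 1) :
    E k ≤ π / 2 * (1 - k ^ 2 / 4 - 3 * k ^ 4 / 64 - 5 * k ^ 6 / 256) :=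
  calc E k ≤ sinSqIntegral (fun u => 1 + (-1 / 2) * u + (-1 / 8) * u ^ 2 + (-1 / 16) * u ^ 3) k :=
        sinSqIntegral_mono (by fun_prop) (by fun_prop) fun u hu =>
          (sqrt_one_sub_le hu.1 (hu.2.trans hk)).trans_eq (by ring)
    _ = _ := by rw [sinSqIntegral_cubic]; ring

lemma le_E {k : ℝ} (hk : k ^ 2 ≤ 1) : π / 2 * (1 - k ^ 2 / 4 - 3 * k ^ 4 / 16) ≤ E k :=
  calc _ = sinSqIntegral (fun u => 1 + (-1 / 2) * u + (-1 / 2) * u ^ 2 + 0 * u ^ 3) k := by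
        rw [sinSqIntegral_cubic]; ring
    _ ≤ E k := sinSqIntegral_mono (by fun_prop) (by fun_prop) fun u hu =>
          (le_sqrt_one_sub hu.1 (hu.2.trans hk)).trans_eq' (by ring)

lemma le_K {k : ℝ} (hk : k ^ 2 < 1) :
    π / 2 * (1 + k ^ 2 / 4 + 9 * k ^ 4 / 64 + 25 * k ^ 6 / 256) ≤ K k :=
  calc _ = sinSqIntegral (fun u => 1 + 1 / 2 * u + 3 / 8 * u ^ 2 + 5 / 16 * u ^ 3) k := by
        rw [sinSqIntegral_cubic]; ring
    _ ≤ K k := sinSqIntegral_mono (by fun_prop) (continuousOn_one_div_sqrt_one_sub hk)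
          fun u hu => (le_one_div_sqrt_one_sub hu.1 (hu.2.trans_lt hk)).trans_eq' (by ring)

lemma K_le {k : ℝ} (hk : k ^ 2 ≤ 1 / 2) : K k ≤ π / 2 * (1 + k ^ 2 / 4 + 3 * k ^ 4 / 8) :=
  calc K k ≤ sinSqIntegral (fun u => 1 + 1 / 2 * u + 1 * u ^ 2 + 0 * u ^ 3) k :=
        sinSqIntegral_mono (continuousOn_one_div_sqrt_one_sub (by linarith)) (by fun_prop)
          fun u hu => (one_div_sqrt_one_sub_le hu.1 (hu.2.trans hk)).trans_eq (by ring)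
    _ = _ := by rw [sinSqIntegral_cubic]; ring

lemma two_mul_E_sub_K_neg {k : ℝ} (hk : 93 / 100 ≤ k ^ 2) (hk₁ : k ^ 2 < 1) :
    2 * E k - K k < 0 :=
  calc 2 * E k - K k ≤ π / 2 * (1 - 3 * k ^ 2 / 4 - 15 * k ^ 4 / 64 - 35 * k ^ 6 / 256) := by
        linarith [E_le hk₁.le, le_K hk₁]
    _ < 0 := by
        have hk₄ : (93 / 100) ^ 2 ≤ k ^ 4 := by nlinarith
        have hk₆ : (93 / 100) ^ 3 ≤ k ^ 6 := by nlinarith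
        exact mul_neg_of_pos_of_neg (by positivity) (by linarith)

lemma quadratic_form_pos {a b c x y : ℝ} (ha : 0 < a) (hdisc : b ^ 2 < 4 * a * c) (hy : y ≠ 0) :
    0 < a * x ^ 2 + b * x * y + c * y ^ 2 := by
  have h : 4 * a * (a * x ^ 2 + b * x * y + c * y ^ 2)
      = (2 * a * x + b * y) ^ 2 + (4 * a * c - b ^ 2) * y ^ 2 := by ring
  have h4 : 0 < 4 * a * (a * x ^ 2 + b * x * y + c * y ^ 2) := by
    rw [h]
    exact add_pos_of_nonneg_of_pos (sq_nonneg _) (mul_pos (sub_pos.2 hdisc) (by positivity))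
  exact pos_of_mul_pos_right h4 (by positivity)

lemma iota₃_numerator_pos_of_discrim_neg {k : ℝ} (hk : k ^ 2 < 1)
    (hdisc : 16 * k ^ 4 - 16 * k ^ 2 + 1 < 0) :
    0 < 3 * (E k) ^ 2 - (5 - 4 * k ^ 2) * E k * K k + 2 * (1 - k ^ 2) * (K k) ^ 2 := by
  have hK : 0 < K k := lt_of_lt_of_le (by positivity) (le_K hk)
  have := quadratic_form_pos (a := 3) (b := -(5 - 4 * k ^ 2)) (c := 2 * (1 - k ^ 2)) (x := E k)
    (by norm_num) (by linarith) hK.ne'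
  linarith

lemma iota₃_numerator_pos_of_sq_le {k : ℝ} (hk : k ≠ 0) (hk' : k ^ 2 ≤ 1 / 10) :
    0 < 3 * (E k) ^ 2 - (5 - 4 * k ^ 2) * E k * K k + 2 * (1 - k ^ 2) * (K k) ^ 2 := by
  have hk₁ : k ^ 2 < 1 := by linarith
  have hk₄ : 0 ≤ k ^ 4 := by positivity
  have hk₆ : 0 ≤ k ^ 6 := by positivity
  have hE₁ := le_E hk₁.le
  have hE₂ : E k ≤ π / 2 * (1 - k ^ 2 / 4) :=
    (E_le hk₁.le).trans <| mul_le_mul_of_nonneg_left (by linarith) pi_div_two_pos.le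
  have hK₁ : π / 2 * (1 + k ^ 2 / 4) ≤ K k :=
    (le_K hk₁).trans' <| mul_le_mul_of_nonneg_left (by linarith) pi_div_two_pos.le
  have hK₂ := K_le (hk'.trans (by norm_num))
  calc 0 < (π / 2) ^ 2 * k ^ 2 * (3 / 2 - 27 / 8 * k ^ 2 + 15 / 8 * k ^ 4 - 69 / 256 * k ^ 6) := by
        have : 0 < 3 / 2 - 27 / 8 * k ^ 2 + 15 / 8 * k ^ 4 - 69 / 256 * k ^ 6 := by nlinarith
        positivity
    _ = 3 * (π / 2 * (1 - k ^ 2 / 4 - 3 * k ^ 4 / 16)) ^ 2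
          - (5 - 4 * k ^ 2) * (π / 2 * (1 - k ^ 2 / 4)) * (π / 2 * (1 + k ^ 2 / 4 + 3 * k ^ 4 / 8))
          + 2 * (1 - k ^ 2) * (π / 2 * (1 + k ^ 2 / 4)) ^ 2 := by ring
    _ ≤ _ := by
        have hK : 0 ≤ K k := (by positivity : (0:ℝ) ≤ π / 2 * (1 + k ^ 2 / 4)).trans hK₁
        gcongr
        · exact mul_nonneg pi_div_two_pos.le (by nlinarith)
        · exact mul_nonneg (by linarith) (mul_nonneg pi_div_two_pos.le (by linarith))
        · linarith

/-- For every `k ∈ (0, k₀)` the quantity `ι₃(k)` is strictly positive, where `k₀` is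
the unique root in `(0,1)` of `2E(k) − K(k) = 0`. -/
theorem iota₃_pos (k₀ : ℝ) (hk₀ : k₀ ∈ Set.Ioo (0:ℝ) 1)
    (hroot : 2 * E k₀ - K k₀ = 0) :
    ∀ k ∈ Set.Ioo 0 k₀, 0 < ι₃ k := by
  rintro k ⟨hk, hkk₀⟩
  have hk₀_sq : k₀ ^ 2 < 93 / 100 := by
    by_contra! h
    exact (two_mul_E_sub_K_neg h (by nlinarith [hk₀.1, hk₀.2])).ne hroot
  have hk_sq : k ^ 2 < 93 / 100 := by nlinarith
  refine div_pos ?_ (by linarith)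
  rcases le_or_gt (k ^ 2) (1 / 10) with hsmall | hmid
  · exact iota₃_numerator_pos_of_sq_le hk.ne' hsmall
  · exact iota₃_numerator_pos_of_discrim_neg (by linarith) (by nlinarith)
end

section
/- Let k ∈ (k₀, 1) and u₁ ∈ (π/2, π); write s₁ = sin u₁, c₁ = cos u₁, d₁ = √(1 − k² s₁²), and E₁ = ∫₀^{u₁} √(1 − k² sin² t) dt. Define Y₁¹ = −(1 + k²(s₁² − 2))/(2k c₁ √(1 − k²)) and W₁¹ = (−E₁ c₁ d₁⁶ + d₁³ s₁ (1 − k² s₁² (6 − 3k²(4 − s₁²) + 4k⁴(2 − s₁²))))/(48 k³ s₁³ c₁ d₁³ (1 − k²)^{3/2}). Then Y₁¹ − 6·W₁¹ = d₁³ (c₁ E₁ − d₁ s₁)/(8 k³ (1 − k²)^{3/2} s₁³ c₁), and this quantity is strictly positive. -/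
/-!
Clearing denominators with `d₁² = 1 - k²s₁²` and `(1 - k²)^{3/2} = (1 - k²)√(1 - k²)` gives the
closed form. On `(π/2, π)` we have `c₁ < 0 < s₁`, and `E₁ ≥ 0` as the integral of a square root,
so both `c₁E₁ - d₁s₁` and the denominator `8k³(1 - k²)^{3/2}s₁³c₁` are negative.
-/

open Real Set Filter Topology

lemma rpow_three_halves_eq_mul_sqrt {x : ℝ} (hx : 0 ≤ x) : x ^ ((3:ℝ)/2) = x * √x := by
  rw [show (3:ℝ)/2 = 1 + 1/2 by norm_num, rpow_add' hx (by norm_num), rpow_one, sqrt_eq_rpow]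

lemma integral_sqrt_one_sub_sq_mul_sin_sq_nonneg (k : ℝ) {u : ℝ} (hu : 0 ≤ u) :
    0 ≤ ∫ t in (0:ℝ)..u, √(1 - k^2 * sin t ^ 2) :=
  intervalIntegral.integral_nonneg hu fun _ _ => sqrt_nonneg _

lemma Y_sub_six_W_eq {k s c d I : ℝ} (hk : k ≠ 0) (hk1 : k^2 < 1) (hs : s ≠ 0) (hc : c ≠ 0)
    (hd : d ≠ 0) (hd2 : d^2 = 1 - k^2 * s^2) :
    -(1 + k^2 * (s^2 - 2)) / (2 * k * c * √(1 - k^2)) - 6 * ((-I * c * d^6 +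
        d^3 * s * (1 - k^2 * s^2 * (6 - 3 * k^2 * (4 - s^2) + 4 * k^4 * (2 - s^2)))) /
        (48 * k^3 * s^3 * c * d^3 * (1 - k^2) ^ ((3:ℝ)/2))) =
      d^3 * (c * I - d * s) / (8 * k^3 * (1 - k^2) ^ ((3:ℝ)/2) * s^3 * c) := by
  have hk1' : 0 < 1 - k^2 := by linarith
  have ha : √(1 - k^2) ≠ 0 := (sqrt_pos.mpr hk1').ne'
  -- the `I`-terms cancel; after dividing by `d³s` what remains is this identity
  have hP : 1 - k^2 * s^2 * (6 - 3 * k^2 * (4 - s^2) + 4 * k^4 * (2 - s^2)) =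
      d^4 - 4 * k^2 * s^2 * (1 - k^2) * (1 + k^2 * (s^2 - 2)) := by
    linear_combination (-(d^2 + 1 - k^2 * s^2)) * hd2
  rw [rpow_three_halves_eq_mul_sqrt hk1'.le, hP]
  field_simp
  ring

lemma Y_sub_six_W_closed_form_pos {k s c d I : ℝ} (hk : 0 < k) (hk1 : k^2 < 1) (hs : 0 < s)
    (hc : c < 0) (hd : 0 < d) (hI : 0 ≤ I) :
    0 < d^3 * (c * I - d * s) / (8 * k^3 * (1 - k^2) ^ ((3:ℝ)/2) * s^3 * c) := by
  apply div_pos_of_neg_of_neg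
  · exact mul_neg_of_pos_of_neg (by positivity) (by nlinarith [mul_pos hd hs])
  · exact mul_neg_of_pos_of_neg (by positivity) hc

theorem Y_minus_sixW_pos_general (k₀ : ℝ) (hk₀ : k₀ ∈ Set.Ioo (0:ℝ) 1)
    (k u₁ : ℝ) (hk : k ∈ Set.Ioo k₀ 1) (hu : u₁ ∈ Set.Ioo (π/2) π)
    (s₁ c₁ d₁ E₁ Y W : ℝ)
    (hs : s₁ = Real.sin u₁) (hc : c₁ = Real.cos u₁)
    (hd : d₁ = Real.sqrt (1 - k^2 * s₁^2))
    (hE : E₁ = ∫ t in (0:ℝ)..u₁, Real.sqrt (1 - k^2 * Real.sin t ^ 2))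
    (hY : Y = -(1 + k^2 * (s₁^2 - 2)) / (2 * k * c₁ * Real.sqrt (1 - k^2)))
    (hW : W = (-E₁ * c₁ * d₁^6 +
        d₁^3 * s₁ * (1 - k^2 * s₁^2 * (6 - 3 * k^2 * (4 - s₁^2) + 4 * k^4 * (2 - s₁^2)))) /
        (48 * k^3 * s₁^3 * c₁ * d₁^3 * (1 - k^2) ^ ((3:ℝ)/2))) :
    Y - 6 * W = d₁^3 * (c₁ * E₁ - d₁ * s₁) /
        (8 * k^3 * (1 - k^2) ^ ((3:ℝ)/2) * s₁^3 * c₁) ∧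
    0 < Y - 6 * W := by
  obtain ⟨hu₁, hu₁'⟩ := hu
  have hk_pos : 0 < k := hk₀.1.trans hk.1
  have hk_sq : k^2 < 1 := by nlinarith [hk.2]
  have hs_pos : 0 < s₁ := hs ▸ sin_pos_of_pos_of_lt_pi (by linarith [pi_pos]) hu₁'
  have hc_neg : c₁ < 0 := hc ▸ cos_neg_of_pi_div_two_lt_of_lt hu₁ (by linarith [pi_pos])
  have hD_pos : 0 < 1 - k^2 * s₁^2 := by nlinarith [hs ▸ sin_sq_le_one u₁]
  have hd_pos : 0 < d₁ := hd ▸ sqrt_pos.mpr hD_pos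
  have hd_sq : d₁^2 = 1 - k^2 * s₁^2 := hd ▸ sq_sqrt hD_pos.le
  have hE_nonneg : 0 ≤ E₁ :=
    hE ▸ integral_sqrt_one_sub_sq_mul_sin_sq_nonneg k (by linarith [pi_pos])
  have h_eq := Y_sub_six_W_eq (I := E₁) hk_pos.ne' hk_sq hs_pos.ne' hc_neg.ne hd_pos.ne' hd_sq
  rw [hY, hW, h_eq]
  exact ⟨rfl, Y_sub_six_W_closed_form_pos hk_pos hk_sq hs_pos hc_neg hd_pos hE_nonneg⟩

/-- For `k ∈ (k₀, 1)` and `u₁ ∈ (π/2, π)`, with `s₁ = sin u₁`, `c₁ = cos u₁`,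
`d₁ = √(1 − k²s₁²)`, `E₁` the incomplete elliptic integral of the second kind,
and `Y₁¹`, `W₁¹` as defined, one has
`Y₁¹ − 6W₁¹ = d₁³(c₁E₁ − d₁s₁)/(8k³(1 − k²)^{3/2}s₁³c₁) > 0`. -/
theorem Y_minus_sixW_pos (k₀ : ℝ) (hk₀ : k₀ ∈ Set.Ioo (0:ℝ) 1)
    (hroot : 2 * E k₀ - K k₀ = 0)
    (k u₁ : ℝ) (hk : k ∈ Set.Ioo k₀ 1) (hu : u₁ ∈ Set.Ioo (π/2) π)
    (s₁ c₁ d₁ E₁ Y W : ℝ)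
    (hs : s₁ = Real.sin u₁) (hc : c₁ = Real.cos u₁)
    (hd : d₁ = Real.sqrt (1 - k^2 * s₁^2))
    (hE : E₁ = ∫ t in (0:ℝ)..u₁, Real.sqrt (1 - k^2 * Real.sin t ^ 2))
    (hY : Y = -(1 + k^2 * (s₁^2 - 2)) / (2 * k * c₁ * Real.sqrt (1 - k^2)))
    (hW : W = (-E₁ * c₁ * d₁^6 +
        d₁^3 * s₁ * (1 - k^2 * s₁^2 * (6 - 3 * k^2 * (4 - s₁^2) + 4 * k^4 * (2 - s₁^2)))) /
        (48 * k^3 * s₁^3 * c₁ * d₁^3 * (1 - k^2) ^ ((3:ℝ)/2))) :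
    Y - 6 * W = d₁^3 * (c₁ * E₁ - d₁ * s₁) /
        (8 * k^3 * (1 - k^2) ^ ((3:ℝ)/2) * s₁^3 * c₁) ∧
    0 < Y - 6 * W :=
  Y_minus_sixW_pos_general k₀ hk₀ k u₁ hk hu s₁ c₁ d₁ E₁ Y W hs hc hd hE hY hW
end

section
/- For every k ∈ (0,1) one has E(k)² − (1 − k²)·K(k)² > 0, i.e. E(k) > √(1 − k²)·K(k). -/
/-!
Reflecting `t ↦ π/2 - t` swaps `sin` and `cos`, so with `a = 1 - k² sin² t`, `b = 1 - k² cos² t`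
and `k' = √(1 - k²)`, twice `E - k'K` is the integral of `√a + √b - k'/√a - k'/√b`. This integrand is
positive because `ab = 1 - k² + k⁴ sin² t cos² t > k'²`.
-/

open Real Set Filter Topology

theorem intervalIntegral.integral_pos_of_add_comp_sub_pos {f : ℝ → ℝ} {a b : ℝ} (hab : a < b)
    (hf : IntervalIntegrable f MeasureTheory.volume a b)
    (hpos : ∀ x ∈ Ioo a b, 0 < f x + f (a + b - x)) :
    0 < ∫ x in a..b, f x := by
  have hf' : IntervalIntegrable (fun x => f (a + b - x)) MeasureTheory.volume a b := by
    simpa using (hf.comp_sub_left (a + b)).symm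
  have hreflect : ∫ x in a..b, f (a + b - x) = ∫ x in a..b, f x := by
    simp [intervalIntegral.integral_comp_sub_left]
  have hsum : 0 < ∫ x in a..b, (f x + f (a + b - x)) :=
    intervalIntegral.intervalIntegral_pos_of_pos_on (hf.add hf') hpos hab
  rw [intervalIntegral.integral_add hf hf', hreflect] at hsum
  linarith

theorem div_add_div_lt_add {x y c : ℝ} (hx : 0 < x) (hy : 0 < y) (hc : c < x * y) :
    c / x + c / y < x + y := by
  have hxy : c / x + c / y = (x + y) * (c / (x * y)) := by field_simp; ring
  rw [hxy]
  have : c / (x * y) < 1 := (div_lt_one (by positivity)).mpr hc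
  nlinarith

theorem one_sub_sq_mul_sq_pos {k x : ℝ} (hk : k ^ 2 < 1) (hx : x ^ 2 ≤ 1) :
    0 < 1 - k ^ 2 * x ^ 2 := by
  nlinarith [sq_nonneg k]

theorem one_sub_sq_lt_mul_sin_cos {k t : ℝ} (hk : k ≠ 0) (ht : t ∈ Ioo 0 (π / 2)) :
    1 - k ^ 2 < (1 - k ^ 2 * sin t ^ 2) * (1 - k ^ 2 * cos t ^ 2) := by
  have hsin : 0 < sin t := sin_pos_of_pos_of_lt_pi ht.1 (by linarith [ht.2, pi_pos])
  have hcos : 0 < cos t := cos_pos_of_mem_Ioo ⟨by linarith [ht.1, pi_pos], ht.2⟩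
  have hprod : 0 < k ^ 4 * (sin t ^ 2 * cos t ^ 2) := by positivity
  have hexpand : (1 - k ^ 2 * sin t ^ 2) * (1 - k ^ 2 * cos t ^ 2)
      = 1 - k ^ 2 * (sin t ^ 2 + cos t ^ 2) + k ^ 4 * (sin t ^ 2 * cos t ^ 2) := by ring
  rw [hexpand, sin_sq_add_cos_sq]
  linarith

theorem sqrt_one_sub_sq_mul_K_lt_E {k : ℝ} (hk0 : k ≠ 0) (hk2 : k ^ 2 < 1) :
    √(1 - k ^ 2) * K k < E k := by
  let c := √(1 - k ^ 2)
  let Δ : ℝ → ℝ := fun t => 1 - k ^ 2 * sin t ^ 2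
  have hΔ : ∀ t, 0 < Δ t := fun t => one_sub_sq_mul_sq_pos hk2 (sin_sq_le_one t)
  have hcont : Continuous fun t => √(Δ t) := by fun_prop
  have hcont' : Continuous fun t => c * (1 / √(Δ t)) :=
    continuous_const.mul (continuous_const.div hcont fun t => (sqrt_pos.mpr (hΔ t)).ne')
  have hdiff : E k - c * K k = ∫ t in (0:ℝ)..(π / 2), (√(Δ t) - c * (1 / √(Δ t))) := by
    rw [intervalIntegral.integral_sub (hcont.intervalIntegrable _ _)
      (hcont'.intervalIntegrable _ _), intervalIntegral.integral_const_mul, E, K]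
  have hpos : ∀ t ∈ Ioo 0 (π / 2),
      0 < √(Δ t) - c * (1 / √(Δ t)) + (√(Δ (π / 2 - t)) - c * (1 / √(Δ (π / 2 - t)))) := by
    intro t ht
    have hcos : Δ (π / 2 - t) = 1 - k ^ 2 * cos t ^ 2 := by simp [Δ, sin_pi_div_two_sub]
    have hc : c < √(Δ t) * √(Δ (π / 2 - t)) := by
      rw [← sqrt_mul (hΔ t).le, hcos]
      exact sqrt_lt_sqrt (by linarith) (one_sub_sq_lt_mul_sin_cos hk0 ht)
    have := div_add_div_lt_add (sqrt_pos.mpr (hΔ t)) (sqrt_pos.mpr (hΔ (π / 2 - t))) hc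
    simp only [mul_one_div] at this ⊢
    linarith
  rw [← sub_pos, hdiff]
  exact intervalIntegral.integral_pos_of_add_comp_sub_pos (by positivity)
    ((hcont.sub hcont').intervalIntegrable _ _) (by simpa only [zero_add] using hpos)

theorem K_nonneg (k : ℝ) : 0 ≤ K k :=
  intervalIntegral.integral_nonneg (by positivity) fun _ _ => by positivity

/-- For every `k ∈ (0,1)` one has `E(k)² − (1 − k²)K(k)² > 0`, i.e.
`E(k) > √(1 − k²)·K(k)`. -/
theorem E_sq_gt :
    ∀ k ∈ Set.Ioo (0:ℝ) 1,
      0 < (E k)^2 - (1 - k^2) * (K k)^2 ∧ Real.sqrt (1 - k^2) * K k < E k := by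
  rintro k ⟨hk0, hk1⟩
  have hk2 : k ^ 2 < 1 := by nlinarith
  have hlt := sqrt_one_sub_sq_mul_K_lt_E hk0.ne' hk2
  have hsq : (√(1 - k ^ 2) * K k) ^ 2 = (1 - k ^ 2) * K k ^ 2 := by
    rw [mul_pow, sq_sqrt (by linarith)]
  have := pow_lt_pow_left₀ hlt (mul_nonneg (sqrt_nonneg _) (K_nonneg k)) two_ne_zero
  exact ⟨by linarith, hlt⟩
end

section
/- Let x₁⁰ < x₁¹ and x₂⁰ < x₂¹ be real numbers, and let f₁, f₂ : ℝ² → ℝ be continuously differentiable on (x₁⁰, x₁¹) × [x₂⁰, x₂¹]. Assume that for all x₁ ∈ (x₁⁰, x₁¹): (i) ∂f₁/∂x₁(x₁, x₂) > 0 for all x₂ ∈ [x₂⁰, x₂¹]; (ii) ∂f₁/∂x₂(x₁, x₂) > 0 for all x₂ ∈ (x₂⁰, x₂¹); (iii) ∂f₁/∂x₂(x₁, x₂⁰) ≥ 0; (iv) ∇(x₁, x₂) := (∂f₂/∂x₁)/(∂f₁/∂x₁) − (∂f₂/∂x₂)/(∂f₁/∂x₂) > 0 for all x₂ ∈ [x₂⁰,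 x₂¹] at which ∂f₁/∂x₂ ≠ 0, and for each x₁ the limit of ∇(x₁, x₂) as x₂ → x₂⁰⁺ exists and is positive. Then for all x₁, x̌₁ ∈ (x₁⁰, x₁¹) and all x₂ ∈ (x₂⁰, x₂¹) satisfying f₁(x̌₁, x₂⁰) = f₁(x₁, x₂), one has f₂(x₁, x₂) < f₂(x̌₁, x₂⁰); i.e., the parametrized set {(f₁(x₁,x₂), f₂(x₁,x₂)) : x₁ ∈ (x₁⁰,x₁¹), x₂ ∈ (x₂⁰,x₂¹)} lies strictly below the boundary curve {(f₁(x₁,x₂⁰), f₂(x₁,x₂⁰)) : x₁ ∈ (x₁⁰,x₁¹)}, viewed as a graph over its first coordinate. -/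
open Set Filter Topology

/-!
Fix `c = f₁(x₁, x₂)`. Since `f₁` is strictly increasing in both variables, the level set
`{f₁ = c}` over `[x₁, x̌₁] × [x₂⁰, x₂]` is the graph of a continuous function `ψ` with
`ψ x₁ = x₂` and `ψ x̌₁ = x₂⁰`; by the implicit function theorem `ψ' = -∂₁f₁ / ∂₂f₁` at interior
points. Hence `s ↦ f₂(s, ψ s)` has derivative `∂₁f₁ · ∇ > 0` there, so it is strictly increasing
and `f₂(x₁, x₂) < f₂(x̌₁, x₂⁰)`.
-/

section Implicit

variable {𝕜 : Type*} [NontriviallyNormedField 𝕜]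
  {E₁ : Type*} [NormedAddCommGroup E₁] [NormedSpace 𝕜 E₁] [CompleteSpace E₁]
  {E₂ : Type*} [NormedAddCommGroup E₂] [NormedSpace 𝕜 E₂] [CompleteSpace E₂]
  {F : Type*} [NormedAddCommGroup F] [NormedSpace 𝕜 F] [CompleteSpace F]

theorem HasStrictFDerivAt.hasStrictFDerivAt_of_eventually_apply_eq {f : E₁ × E₂ → F}
    {f' : E₁ × E₂ →L[𝕜] F} {ψ : E₁ → E₂} {x : E₁} (hf : HasStrictFDerivAt f f' (x, ψ x))
    (hf' : (f' ∘L .inr 𝕜 E₁ E₂).IsInvertible) (hψ : ContinuousAt ψ x)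
    (hlevel : ∀ᶠ y in 𝓝 x, f (y, ψ y) = f (x, ψ x)) :
    HasStrictFDerivAt ψ (-(f' ∘L .inr 𝕜 E₁ E₂).inverse ∘L (f' ∘L .inl 𝕜 E₁ E₂)) x := by
  have hgraph : Tendsto (fun y => (y, ψ y)) (𝓝 x) (𝓝 (x, ψ x)) :=
    continuousAt_id.prodMk hψ
  refine (hf.hasStrictFDerivAt_implicitFunctionOfProdDomain hf').congr_of_eventuallyEq ?_
  filter_upwards [hgraph.eventually (hf.eventually_apply_eq_iff_implicitFunctionOfProdDomain hf'),
    hlevel] with y hiff hy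
  exact hiff.1 hy

end Implicit

section Partials

variable {F : Type*} [NormedAddCommGroup F] [NormedSpace ℝ F]

theorem HasFDerivAt.apply_eq_smul_add_smul {f : ℝ → ℝ → F} {D : ℝ × ℝ →L[ℝ] F} {s t : ℝ}
    {d₁ d₂ : F} (hD : HasFDerivAt (Function.uncurry f) D (s, t)) (h₁ : HasDerivAt (f · t) d₁ s)
    (h₂ : HasDerivAt (f s) d₂ t) (v : ℝ × ℝ) : D v = v.1 • d₁ + v.2 • d₂ := by
  have e₁ : D (1, 0) = d₁ :=
    (hD.comp_hasDerivAt (f := fun σ => (σ, t)) s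
      ((hasDerivAt_id s).prodMk (hasDerivAt_const s t))).unique h₁
  have e₂ : D (0, 1) = d₂ :=
    (hD.comp_hasDerivAt (f := fun τ => (s, τ)) t
      ((hasDerivAt_const t s).prodMk (hasDerivAt_id t))).unique h₂
  have hv : v = v.1 • ((1 : ℝ), (0 : ℝ)) + v.2 • ((0 : ℝ), (1 : ℝ)) := by simp
  rw [hv, map_add, map_smul, map_smul, e₁, e₂]
  simp

theorem hasDerivAt_apply_graph {f : ℝ → ℝ → F} {ψ : ℝ → ℝ} {s ψ' : ℝ} {d₁ d₂ : F}
    (hf : DifferentiableAt ℝ (Function.uncurry f) (s, ψ s)) (h₁ : HasDerivAt (f · (ψ s)) d₁ s)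
    (h₂ : HasDerivAt (f s) d₂ (ψ s)) (hψ : HasDerivAt ψ ψ' s) :
    HasDerivAt (fun σ => f σ (ψ σ)) (d₁ + ψ' • d₂) s := by
  have := hf.hasFDerivAt.comp_hasDerivAt s ((hasDerivAt_id s).prodMk hψ)
  rwa [hf.hasFDerivAt.apply_eq_smul_add_smul h₁ h₂, one_smul] at this

end Partials

theorem hasDerivAt_of_eventually_apply_eq {f : ℝ → ℝ → ℝ} {ψ : ℝ → ℝ} {s d₁ d₂ : ℝ}
    (hf : ContDiffAt ℝ 1 (Function.uncurry f) (s, ψ s)) (h₁ : HasDerivAt (f · (ψ s)) d₁ s)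
    (h₂ : HasDerivAt (f s) d₂ (ψ s)) (hd₂ : d₂ ≠ 0) (hψ : ContinuousAt ψ s)
    (hlevel : ∀ᶠ σ in 𝓝 s, f σ (ψ σ) = f s (ψ s)) :
    HasDerivAt ψ (-(d₁ / d₂)) s := by
  have hD := hf.hasStrictFDerivAt one_ne_zero
  have hpartial := hD.hasFDerivAt.apply_eq_smul_add_smul h₁ h₂
  have hinv : (fderiv ℝ (Function.uncurry f) (s, ψ s) ∘L .inr ℝ ℝ ℝ).IsInvertible :=
    ⟨ContinuousLinearEquiv.unitsEquivAut ℝ (Units.mk0 d₂ hd₂), by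
      ext; simp [hpartial, ContinuousLinearEquiv.unitsEquivAut_apply]⟩
  obtain ⟨ψ', hψ'⟩ : ∃ ψ', HasDerivAt ψ ψ' s :=
    ⟨_, (hD.hasStrictFDerivAt_of_eventually_apply_eq hinv hψ hlevel).differentiableAt.hasDerivAt⟩
  have hzero : d₁ + ψ' * d₂ = 0 :=
    (hasDerivAt_apply_graph hD.differentiableAt h₁ h₂ hψ').unique
      ((hasDerivAt_const s _).congr_of_eventuallyEq hlevel)
  convert hψ' using 1
  field_simp
  linarith

section LevelCurve

variable {f : ℝ → ℝ → ℝ} {a b p q c : ℝ}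

theorem continuousOn_of_strictMonoOn_of_apply_eq {S : Set ℝ} {ψ : ℝ → ℝ}
    (hmono : ∀ s ∈ S, StrictMonoOn (f s) (Icc p q))
    (hcont : ∀ t ∈ Icc p q, ContinuousOn (f · t) S)
    (hψ : ∀ s ∈ S, ψ s ∈ Icc p q ∧ f s (ψ s) = c) : ContinuousOn ψ S := by
  intro s₀ hs₀
  obtain ⟨⟨hp₀, hq₀⟩, hc₀⟩ := hψ s₀ hs₀
  refine tendsto_order.2 ⟨fun t ht => ?_, fun t ht => ?_⟩
  · rcases lt_or_ge t p with htp | hpt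
    · filter_upwards [self_mem_nhdsWithin] with s hs using htp.trans_le (hψ s hs).1.1
    have htI : t ∈ Icc p q := ⟨hpt, ht.le.trans hq₀⟩
    have hlt : f s₀ t < c := hc₀ ▸ hmono s₀ hs₀ htI ⟨hp₀, hq₀⟩ ht
    filter_upwards [(hcont t htI s₀ hs₀).eventually_lt_const hlt, self_mem_nhdsWithin]
      with s hs hsS
    rw [← (hψ s hsS).2] at hs
    exact (hmono s hsS).lt_iff_lt htI (hψ s hsS).1 |>.1 hs
  · rcases lt_or_ge q t with hqt | htq
    · filter_upwards [self_mem_nhdsWithin] with s hs using (hψ s hs).1.2.trans_lt hqt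
    have htI : t ∈ Icc p q := ⟨hp₀.trans ht.le, htq⟩
    have hlt : c < f s₀ t := hc₀ ▸ hmono s₀ hs₀ ⟨hp₀, hq₀⟩ htI ht
    filter_upwards [(hcont t htI s₀ hs₀).eventually_const_lt hlt, self_mem_nhdsWithin]
      with s hs hsS
    rw [← (hψ s hsS).2] at hs
    exact (hmono s hsS).lt_iff_lt (hψ s hsS).1 htI |>.1 hs

theorem exists_levelCurve (hab : a ≤ b) (hpq : p ≤ q)
    (hmono₁ : ∀ t ∈ Icc p q, StrictMonoOn (f · t) (Icc a b))
    (hmono₂ : ∀ s ∈ Icc a b, StrictMonoOn (f s) (Icc p q))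
    (hcont₁ : ∀ t ∈ Icc p q, ContinuousOn (f · t) (Icc a b))
    (hcont₂ : ∀ s ∈ Icc a b, ContinuousOn (f s) (Icc p q))
    (ha : f a q = c) (hb : f b p = c) :
    ∃ ψ : ℝ → ℝ, (∀ s ∈ Icc a b, ψ s ∈ Icc p q ∧ f s (ψ s) = c) ∧ ContinuousOn ψ (Icc a b) ∧
      ψ a = q ∧ ψ b = p ∧ MapsTo ψ (Ioo a b) (Ioo p q) := by
  have hpI : p ∈ Icc p q := left_mem_Icc.2 hpq
  have hqI : q ∈ Icc p q := right_mem_Icc.2 hpq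
  have haI : a ∈ Icc a b := left_mem_Icc.2 hab
  have hbI : b ∈ Icc a b := right_mem_Icc.2 hab
  have hex : ∀ s, ∃ t, s ∈ Icc a b → t ∈ Icc p q ∧ f s t = c := by
    intro s
    by_cases hs : s ∈ Icc a b
    · obtain ⟨t, ht, hft⟩ := intermediate_value_Icc hpq (hcont₂ s hs)
        ⟨hb ▸ (hmono₁ p hpI).monotoneOn hs hbI hs.2, ha ▸ (hmono₁ q hqI).monotoneOn haI hs hs.1⟩
      exact ⟨t, fun _ => ⟨ht, hft⟩⟩
    · exact ⟨p, fun h => absurd h hs⟩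
  choose ψ hψ using hex
  have hψa : ψ a = q := (hmono₂ a haI).injOn (hψ a haI).1 hqI ((hψ a haI).2.trans ha.symm)
  have hψb : ψ b = p := (hmono₂ b hbI).injOn (hψ b hbI).1 hpI ((hψ b hbI).2.trans hb.symm)
  refine ⟨ψ, hψ, continuousOn_of_strictMonoOn_of_apply_eq hmono₂ hcont₁ hψ, hψa, hψb,
    fun s hs => ?_⟩
  have hsI : s ∈ Icc a b := Ioo_subset_Icc_self hs
  obtain ⟨hψI, hψc⟩ := hψ s hsI
  constructor
  · refine lt_of_le_of_ne hψI.1 fun hp => ?_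
    have : f s p < f b p := hmono₁ p hpI hsI hbI hs.2
    rw [hb, hp, hψc] at this
    exact this.false
  · refine lt_of_le_of_ne hψI.2 fun hq => ?_
    have : f a q < f s q := hmono₁ q hqI haI hsI hs.1
    rw [ha, ← hq, hψc] at this
    exact this.false

end LevelCurve

theorem hasDerivAt_comp_levelCurve {f₁ f₂ : ℝ → ℝ → ℝ} {ψ : ℝ → ℝ} {s d₁₁ d₁₂ d₂₁ d₂₂ : ℝ}
    (hf₁ : ContDiffAt ℝ 1 (Function.uncurry f₁) (s, ψ s))
    (hf₂ : DifferentiableAt ℝ (Function.uncurry f₂) (s, ψ s))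
    (h₁₁ : HasDerivAt (f₁ · (ψ s)) d₁₁ s) (h₁₂ : HasDerivAt (f₁ s) d₁₂ (ψ s))
    (h₂₁ : HasDerivAt (f₂ · (ψ s)) d₂₁ s) (h₂₂ : HasDerivAt (f₂ s) d₂₂ (ψ s))
    (hd₁₁ : d₁₁ ≠ 0) (hd₁₂ : d₁₂ ≠ 0) (hψ : ContinuousAt ψ s)
    (hlevel : ∀ᶠ σ in 𝓝 s, f₁ σ (ψ σ) = f₁ s (ψ s)) :
    HasDerivAt (fun σ => f₂ σ (ψ σ)) (d₁₁ * (d₂₁ / d₁₁ - d₂₂ / d₁₂)) s := by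
  refine (hasDerivAt_apply_graph hf₂ h₂₁ h₂₂
    (hasDerivAt_of_eventually_apply_eq hf₁ h₁₁ h₁₂ hd₁₂ hψ hlevel)).congr_deriv ?_
  rw [smul_eq_mul]
  field_simp
  ring

section Rectangle

variable {x10 x11 x20 x21 : ℝ} {f₁ f₂ g11 g12 g21 g22 : ℝ → ℝ → ℝ}

theorem strictMonoOn_comp_levelCurve
    (hcd1 : ContDiffOn ℝ 1 (Function.uncurry f₁) (Ioo x10 x11 ×ˢ Icc x20 x21))
    (hcd2 : ContDiffOn ℝ 1 (Function.uncurry f₂) (Ioo x10 x11 ×ˢ Icc x20 x21))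
    (hd11 : ∀ s ∈ Ioo x10 x11, ∀ t ∈ Icc x20 x21, HasDerivAt (f₁ · t) (g11 s t) s)
    (hd12 : ∀ s ∈ Ioo x10 x11, ∀ t ∈ Icc x20 x21,
      HasDerivWithinAt (f₁ s) (g12 s t) (Icc x20 x21) t)
    (hd21 : ∀ s ∈ Ioo x10 x11, ∀ t ∈ Icc x20 x21, HasDerivAt (f₂ · t) (g21 s t) s)
    (hd22 : ∀ s ∈ Ioo x10 x11, ∀ t ∈ Icc x20 x21,
      HasDerivWithinAt (f₂ s) (g22 s t) (Icc x20 x21) t)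
    (hi : ∀ s ∈ Ioo x10 x11, ∀ t ∈ Icc x20 x21, 0 < g11 s t)
    (hii : ∀ s ∈ Ioo x10 x11, ∀ t ∈ Ioo x20 x21, 0 < g12 s t)
    (hiv : ∀ s ∈ Ioo x10 x11, ∀ t ∈ Icc x20 x21, g12 s t ≠ 0 →
      0 < g21 s t / g11 s t - g22 s t / g12 s t)
    {a b c : ℝ} {ψ : ℝ → ℝ} (hab : Icc a b ⊆ Ioo x10 x11)
    (hψ : MapsTo ψ (Icc a b) (Icc x20 x21)) (hψint : MapsTo ψ (Ioo a b) (Ioo x20 x21))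
    (hψcont : ContinuousOn ψ (Icc a b)) (hlevel : ∀ s ∈ Icc a b, f₁ s (ψ s) = c) :
    StrictMonoOn (fun s => f₂ s (ψ s)) (Icc a b) := by
  refine strictMonoOn_of_hasDerivWithinAt_pos (convex_Icc a b)
    (hcd2.continuousOn.comp (continuousOn_id.prodMk hψcont) fun s hs => ⟨hab hs, hψ hs⟩)
    (f' := fun s => g11 s (ψ s) * (g21 s (ψ s) / g11 s (ψ s) - g22 s (ψ s) / g12 s (ψ s)))
    (fun s hs => ?_) (fun s hs => ?_)
  all_goals
    rw [interior_Icc] at hs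
    have hs₁ : s ∈ Ioo x10 x11 := hab (Ioo_subset_Icc_self hs)
    have hψs : ψ s ∈ Ioo x20 x21 := hψint hs
    have hψs' : ψ s ∈ Icc x20 x21 := Ioo_subset_Icc_self hψs
    have hg12 : 0 < g12 s (ψ s) := hii s hs₁ (ψ s) hψs
  · have hN : Ioo x10 x11 ×ˢ Icc x20 x21 ∈ 𝓝 (s, ψ s) :=
      mem_of_superset (prod_mem_nhds (Ioo_mem_nhds hs₁.1 hs₁.2) (Ioo_mem_nhds hψs.1 hψs.2))
        (prod_mono_right Ioo_subset_Icc_self)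
    have hψsN : Icc x20 x21 ∈ 𝓝 (ψ s) := Icc_mem_nhds hψs.1 hψs.2
    have hsN : Icc a b ∈ 𝓝 s := Icc_mem_nhds hs.1 hs.2
    refine (hasDerivAt_comp_levelCurve (hcd1.contDiffAt hN)
      ((hcd2.contDiffAt hN).differentiableAt one_ne_zero) (hd11 s hs₁ _ hψs')
      ((hd12 s hs₁ _ hψs').hasDerivAt hψsN) (hd21 s hs₁ _ hψs')
      ((hd22 s hs₁ _ hψs').hasDerivAt hψsN) (hi s hs₁ _ hψs').ne' hg12.ne'
      ((hψcont s (Ioo_subset_Icc_self hs)).continuousAt hsN) ?_).hasDerivWithinAt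
    filter_upwards [hsN] with σ hσ
    rw [hlevel σ hσ, hlevel s (Ioo_subset_Icc_self hs)]
  · exact mul_pos (hi s hs₁ _ hψs') (hiv s hs₁ _ hψs' hg12.ne')

end Rectangle

theorem below_boundary_curve_general
    (x10 x11 x20 x21 : ℝ)
    (f₁ f₂ g11 g12 g21 g22 : ℝ → ℝ → ℝ)
    -- f₁, f₂ are continuously differentiable on (x₁⁰, x₁¹) × [x₂⁰, x₂¹]
    (hcd1 : ContDiffOn ℝ 1 (Function.uncurry f₁) (Set.Ioo x10 x11 ×ˢ Set.Icc x20 x21))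
    (hcd2 : ContDiffOn ℝ 1 (Function.uncurry f₂) (Set.Ioo x10 x11 ×ˢ Set.Icc x20 x21))
    -- g11, g12 (resp. g21, g22) are the partial derivatives of f₁ (resp. f₂)
    (hd11 : ∀ x₁ ∈ Set.Ioo x10 x11, ∀ x₂ ∈ Set.Icc x20 x21,
      HasDerivAt (fun s => f₁ s x₂) (g11 x₁ x₂) x₁)
    (hd12 : ∀ x₁ ∈ Set.Ioo x10 x11, ∀ x₂ ∈ Set.Icc x20 x21,
      HasDerivWithinAt (fun s => f₁ x₁ s) (g12 x₁ x₂) (Set.Icc x20 x21) x₂)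
    (hd21 : ∀ x₁ ∈ Set.Ioo x10 x11, ∀ x₂ ∈ Set.Icc x20 x21,
      HasDerivAt (fun s => f₂ s x₂) (g21 x₁ x₂) x₁)
    (hd22 : ∀ x₁ ∈ Set.Ioo x10 x11, ∀ x₂ ∈ Set.Icc x20 x21,
      HasDerivWithinAt (fun s => f₂ x₁ s) (g22 x₁ x₂) (Set.Icc x20 x21) x₂)
    -- (i) ∂f₁/∂x₁ > 0 on (x₁⁰, x₁¹) × [x₂⁰, x₂¹]
    (hi : ∀ x₁ ∈ Set.Ioo x10 x11, ∀ x₂ ∈ Set.Icc x20 x21, 0 < g11 x₁ x₂)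
    -- (ii) ∂f₁/∂x₂ > 0 on (x₁⁰, x₁¹) × (x₂⁰, x₂¹)
    (hii : ∀ x₁ ∈ Set.Ioo x10 x11, ∀ x₂ ∈ Set.Ioo x20 x21, 0 < g12 x₁ x₂)
    -- (iv) slope comparison ∇ > 0 where defined, and ∇ has a positive limit as x₂ → x₂⁰⁺
    (hiv : ∀ x₁ ∈ Set.Ioo x10 x11, ∀ x₂ ∈ Set.Icc x20 x21, g12 x₁ x₂ ≠ 0 →
      0 < g21 x₁ x₂ / g11 x₁ x₂ - g22 x₁ x₂ / g12 x₁ x₂) :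
    ∀ x₁ ∈ Set.Ioo x10 x11, ∀ xc₁ ∈ Set.Ioo x10 x11, ∀ x₂ ∈ Set.Ioo x20 x21,
      f₁ xc₁ x20 = f₁ x₁ x₂ → f₂ x₁ x₂ < f₂ xc₁ x20 := by
  intro x₁ hx₁ xc₁ hxc₁ x₂ hx₂ heq
  have hmono₁ : ∀ t ∈ Icc x20 x21, StrictMonoOn (f₁ · t) (Ioo x10 x11) := fun t ht =>
    strictMonoOn_of_hasDerivWithinAt_pos (convex_Ioo _ _)
      (fun s hs => (hd11 s hs t ht).continuousAt.continuousWithinAt)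
      (fun s hs => (hd11 s (interior_subset hs) t ht).hasDerivWithinAt)
      (fun s hs => hi s (interior_subset hs) t ht)
  have hmono₂ : ∀ s ∈ Ioo x10 x11, StrictMonoOn (f₁ s) (Icc x20 x21) := fun s hs =>
    strictMonoOn_of_hasDerivWithinAt_pos (convex_Icc _ _)
      (fun t ht => (hd12 s hs t ht).continuousWithinAt)
      (fun t ht => (hd12 s hs t (interior_subset ht)).mono interior_subset)
      (fun t ht => hii s hs t (by rwa [interior_Icc] at ht))
  have hx₂I : x₂ ∈ Icc x20 x21 := Ioo_subset_Icc_self hx₂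
  have h20I : x20 ∈ Icc x20 x21 := ⟨le_rfl, hx₂I.1.trans hx₂I.2⟩
  have hlt : x₁ < xc₁ := by
    by_contra! hle
    have h₁ : f₁ xc₁ x20 ≤ f₁ x₁ x20 := (hmono₁ x20 h20I).monotoneOn hxc₁ hx₁ hle
    have h₂ : f₁ x₁ x20 < f₁ x₁ x₂ := hmono₂ x₁ hx₁ h20I hx₂I hx₂.1
    linarith
  have hbox₁ : Icc x₁ xc₁ ⊆ Ioo x10 x11 := Icc_subset_Ioo hx₁.1 hxc₁.2
  have hbox₂ : Icc x20 x₂ ⊆ Icc x20 x21 := Icc_subset_Icc_right hx₂.2.le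
  obtain ⟨ψ, hψ, hψcont, hψx₁, hψxc₁, hψint⟩ := exists_levelCurve hlt.le hx₂.1.le
    (fun t ht => (hmono₁ t (hbox₂ ht)).mono hbox₁) (fun s hs => (hmono₂ s (hbox₁ hs)).mono hbox₂)
    (fun t ht s hs => (hd11 s (hbox₁ hs) t (hbox₂ ht)).continuousAt.continuousWithinAt)
    (fun s hs t ht => (hd12 s (hbox₁ hs) t (hbox₂ ht)).continuousWithinAt.mono hbox₂) rfl heq
  have hincr := strictMonoOn_comp_levelCurve hcd1 hcd2 hd11 hd12 hd21 hd22 hi hii hiv hbox₁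
    (fun s hs => hbox₂ (hψ s hs).1) (hψint.mono_right (Ioo_subset_Ioo_right hx₂.2.le)) hψcont
    (fun s hs => (hψ s hs).2)
  simpa [hψx₁, hψxc₁] using hincr (left_mem_Icc.2 hlt.le) (right_mem_Icc.2 hlt.le) hlt

/-- Comparison lemma for parametrized planar sets (Lemma 22): under monotonicity and
slope-comparison conditions on the partial derivatives, the parametrized set
`{(f₁(x₁,x₂), f₂(x₁,x₂))}` lies strictly below the boundary curve
`{(f₁(x₁,x₂⁰), f₂(x₁,x₂⁰))}` viewed as a graph over its first coordinate. -/
theorem below_boundary_curve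
    (x10 x11 x20 x21 : ℝ) (hx1 : x10 < x11) (hx2 : x20 < x21)
    (f₁ f₂ g11 g12 g21 g22 : ℝ → ℝ → ℝ)
    -- f₁, f₂ are continuously differentiable on (x₁⁰, x₁¹) × [x₂⁰, x₂¹]
    (hcd1 : ContDiffOn ℝ 1 (Function.uncurry f₁) (Set.Ioo x10 x11 ×ˢ Set.Icc x20 x21))
    (hcd2 : ContDiffOn ℝ 1 (Function.uncurry f₂) (Set.Ioo x10 x11 ×ˢ Set.Icc x20 x21))
    -- g11, g12 (resp. g21, g22) are the partial derivatives of f₁ (resp. f₂)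
    (hd11 : ∀ x₁ ∈ Set.Ioo x10 x11, ∀ x₂ ∈ Set.Icc x20 x21,
      HasDerivAt (fun s => f₁ s x₂) (g11 x₁ x₂) x₁)
    (hd12 : ∀ x₁ ∈ Set.Ioo x10 x11, ∀ x₂ ∈ Set.Icc x20 x21,
      HasDerivWithinAt (fun s => f₁ x₁ s) (g12 x₁ x₂) (Set.Icc x20 x21) x₂)
    (hd21 : ∀ x₁ ∈ Set.Ioo x10 x11, ∀ x₂ ∈ Set.Icc x20 x21,
      HasDerivAt (fun s => f₂ s x₂) (g21 x₁ x₂) x₁)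
    (hd22 : ∀ x₁ ∈ Set.Ioo x10 x11, ∀ x₂ ∈ Set.Icc x20 x21,
      HasDerivWithinAt (fun s => f₂ x₁ s) (g22 x₁ x₂) (Set.Icc x20 x21) x₂)
    -- (i) ∂f₁/∂x₁ > 0 on (x₁⁰, x₁¹) × [x₂⁰, x₂¹]
    (hi : ∀ x₁ ∈ Set.Ioo x10 x11, ∀ x₂ ∈ Set.Icc x20 x21, 0 < g11 x₁ x₂)
    -- (ii) ∂f₁/∂x₂ > 0 on (x₁⁰, x₁¹) × (x₂⁰, x₂¹)
    (hii : ∀ x₁ ∈ Set.Ioo x10 x11, ∀ x₂ ∈ Set.Ioo x20 x21, 0 < g12 x₁ x₂)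
    -- (iii) ∂f₁/∂x₂(x₁, x₂⁰) ≥ 0
    (hiii : ∀ x₁ ∈ Set.Ioo x10 x11, 0 ≤ g12 x₁ x20)
    -- (iv) slope comparison ∇ > 0 where defined, and ∇ has a positive limit as x₂ → x₂⁰⁺
    (hiv : ∀ x₁ ∈ Set.Ioo x10 x11, ∀ x₂ ∈ Set.Icc x20 x21, g12 x₁ x₂ ≠ 0 →
      0 < g21 x₁ x₂ / g11 x₁ x₂ - g22 x₁ x₂ / g12 x₁ x₂)
    (hlim : ∀ x₁ ∈ Set.Ioo x10 x11, ∃ L : ℝ, 0 < L ∧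
      Tendsto (fun x₂ => g21 x₁ x₂ / g11 x₁ x₂ - g22 x₁ x₂ / g12 x₁ x₂)
        (nhdsWithin x20 (Set.Ioi x20)) (nhds L)) :
    ∀ x₁ ∈ Set.Ioo x10 x11, ∀ xc₁ ∈ Set.Ioo x10 x11, ∀ x₂ ∈ Set.Ioo x20 x21,
      f₁ xc₁ x20 = f₁ x₁ x₂ → f₂ x₁ x₂ < f₂ xc₁ x20 :=
  below_boundary_curve_general x10 x11 x20 x21 f₁ f₂ g11 g12 g21 g22 hcd1 hcd2 hd11 hd12 hd21 hd22
    hi hii hiv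
end
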